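/- For every d-dimensional weak pseudo-cube G = (V,E) and every nonempty set U of vertices of size s, the edge expansion satisfies φ_G(U) ≥ d − log₂ s. -/

import Mathlib

/-!
We model a finite `d`-regular graph with a proper edge `d`-coloring
(each vertex meets exactly one edge of each color) by giving, for every
color `i : Fin d`, a fixed-point-free involution `m i` on the vertices:
the color-`i` edges are the pairs `{v, m i v}`.
-/
structure EdgeColoredGraph (V : Type) (d : ℕ) where
  /-- `m i v` is the other endpoint of the unique color-`i` edge at `v`. -/
  m : Fin d → V → V
  invol : ∀ i v, m i (m i v) = v
  ne : ∀ i v, m i v ≠ v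

namespace EdgeColoredGraph

variable {V : Type} {d : ℕ}

/-- `G.ReachIn S u v` : `v` is reachable from `u` using only edges whose
color lies in `S`. -/
def ReachIn (G : EdgeColoredGraph V d) (S : Set (Fin d)) : V → V → Prop :=
  Relation.ReflTransGen (fun a b => ∃ i ∈ S, G.m i a = b)

/-- Color independence: for every color `i`, contracting all edges of
color `≠ i` produces no self-loop, i.e. no color-`i` edge has its two
endpoints joined by a path avoiding color `i`. -/
def IsPseudoCube (G : EdgeColoredGraph V d) : Prop :=
  ∀ (i : Fin d) (v : V), ¬ G.ReachIn {j | j ≠ i} v (G.m i v)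

/-- `∂(U)`: the number of edges with exactly one endpoint in `U`
(each such edge is counted once, at its endpoint inside `U`). -/
def boundary [Fintype V] [DecidableEq V] (G : EdgeColoredGraph V d) (U : Finset V) : ℕ :=
  ∑ i : Fin d, (U.filter fun v => G.m i v ∉ U).card

end EdgeColoredGraph

namespace EdgeColoredGraph

variable {V : Type} {d : ℕ}

/-- The connected component of `v` in the graph obtained from `G` by deleting
all edges of the top color `d`. -/
def comp (G : EdgeColoredGraph V (d + 1)) (v : V) : Type :=
  {u : V // G.ReachIn {i | i ≠ Fin.last d} v u}

/-- The (d-dimensional, edge `d`-colored) graph induced by `G` on the connected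
component of `v` after deleting all edges of the top color. -/
def restrict (G : EdgeColoredGraph V (d + 1)) (v : V) : EdgeColoredGraph (G.comp v) d where
  m i u := ⟨G.m i.castSucc u.1,
    u.2.tail ⟨i.castSucc, (Fin.castSucc_lt_last i).ne, rfl⟩⟩
  invol i u := Subtype.ext (G.invol i.castSucc u.1)
  ne i u h := G.ne i.castSucc u.1 (congrArg Subtype.val h)

/-- A weak pseudo-cube: `d`-regular, properly edge `d`-colored, contracting
all edges of color `≠ d` gives no self-loop, and every connected component of
the graph with the color-`d` edges deleted is a `(d-1)`-dimensional weak
pseudo-cube.  (For `d = 1` the conditions amount to a perfect matching, which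
holds automatically in this encoding.) -/
def IsWeakPseudoCube : ∀ {d : ℕ} {V : Type}, EdgeColoredGraph V d → Prop
  | 0, _, _ => True
  | _ + 1, _, G =>
      (∀ v, ¬ G.ReachIn {i | i ≠ Fin.last _} v (G.m (Fin.last _) v)) ∧
      ∀ v, IsWeakPseudoCube (G.restrict v)

/-- A weakly dual systolic graph: a weak pseudo-cube such that the multigraph
obtained by contracting all edges of color `≠ d` is simple (between any two
connected components of the color-`d`-deleted graph there is at most one
color-`d` edge), and every connected component of the color-`d`-deleted graph
is weakly dual systolic of dimension `d - 1`. -/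
def IsWeaklyDualSystolic : ∀ {d : ℕ} {V : Type}, EdgeColoredGraph V d → Prop
  | 0, _, _ => True
  | _ + 1, _, G =>
      IsWeakPseudoCube G ∧
      (∀ a b, G.ReachIn {i | i ≠ Fin.last _} a b →
        G.ReachIn {i | i ≠ Fin.last _} (G.m (Fin.last _) a) (G.m (Fin.last _) b) → a = b) ∧
      ∀ v, IsWeaklyDualSystolic (G.restrict v)

end EdgeColoredGraph

/-!
Induct on `d`. Split `U`, of size `s`, along the components of `G` minus its top color. On a part
of size `x` the lower colors contribute at least `x (d - 1 - log₂ x)` by induction. A top-color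
edge never joins two vertices of one component, so at most `min x (s - x)` of the part's top-color
edges stay inside `U`; concavity of `log₂` bounds this by `x (log₂ s - log₂ x)`, which is exactly
what passing from `log₂ x` to `log₂ s` costs. Summing over the parts gives `s (d - log₂ s)`.
-/

open Finset Real

lemma sub_one_le_logb_two {t : ℝ} (h1 : 1 ≤ t) (h2 : t ≤ 2) : t - 1 ≤ logb 2 t := by
  rw [le_logb_iff_rpow_le one_lt_two (by linarith)]
  have bernoulli := rpow_one_add_le_one_add_mul_self (s := 1) (by norm_num) (p := t - 1)
    (by linarith) (by linarith)
  norm_num at bernoulli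
  linarith

lemma min_le_mul_logb_two_sub {x s : ℝ} (hx : 0 < x) (hxs : x ≤ s) :
    min x (s - x) ≤ x * (logb 2 s - logb 2 x) := by
  have hs : 0 < s := hx.trans_le hxs
  rw [← logb_div hs.ne' hx.ne']
  rcases le_or_gt (2 * x) s with h | h
  · have : 1 ≤ logb 2 (s / x) := by
      rw [le_logb_iff_rpow_le one_lt_two (by positivity), rpow_one, le_div_iff₀ hx]
      exact h
    calc min x (s - x) ≤ x := min_le_left _ _
      _ ≤ x * logb 2 (s / x) := le_mul_of_one_le_right hx.le this
  · have : s / x - 1 ≤ logb 2 (s / x) := by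
      apply sub_one_le_logb_two
      · rwa [le_div_iff₀ hx, one_mul]
      · rw [div_le_iff₀ hx]; linarith
    calc min x (s - x) ≤ s - x := min_le_right _ _
      _ = x * (s / x - 1) := by field_simp
      _ ≤ x * logb 2 (s / x) := by gcongr

theorem Finset.card_mul_le_sum_of_forall_class {V : Type} {r : V → V → Prop} (hr : Equivalence r)
    [DecidableRel r] (U : Finset V) (w : V → ℝ) (c : ℝ)
    (h : ∀ v ∈ U, #{u ∈ U | r v u} * c ≤ ∑ u ∈ U with r v u, w u) :
    #U * c ≤ ∑ u ∈ U, w u := by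
  classical
  let s : Setoid V := ⟨r, hr⟩
  have hmaps : ∀ u ∈ U, Quotient.mk s u ∈ U.image (Quotient.mk s) :=
    fun u hu => mem_image_of_mem _ hu
  rw [← sum_fiberwise_of_maps_to hmaps, ← nsmul_eq_mul, ← sum_const,
    ← sum_fiberwise_of_maps_to hmaps]
  refine sum_le_sum fun q hq => ?_
  obtain ⟨v, hv, rfl⟩ := mem_image.1 hq
  have hclass : {u ∈ U | Quotient.mk s u = Quotient.mk s v} = {u ∈ U | r v u} :=
    filter_congr fun u _ => Quotient.eq.trans ⟨hr.symm, hr.symm⟩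
  rw [hclass, sum_const, nsmul_eq_mul]
  exact h v hv

theorem Finset.card_filter_subtype {α : Type} (p q : α → Prop) [DecidablePred p]
    [DecidablePred q] (s : Finset α) :
    #{u ∈ s.subtype p | q u.1} = #{u ∈ s | p u ∧ q u} := by
  rw [← card_map (Function.Embedding.subtype p)]
  congr 1
  ext a
  simp only [mem_map, mem_filter, mem_subtype, Function.Embedding.coe_subtype]
  exact ⟨fun ⟨b, ⟨hb, hq⟩, hba⟩ => hba ▸ ⟨hb, b.2, hq⟩,
    fun ⟨ha, hp, hq⟩ => ⟨⟨a, hp⟩, ⟨ha, hq⟩, rfl⟩⟩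

namespace EdgeColoredGraph

variable {V : Type} {d : ℕ}

theorem reachIn_equivalence (G : EdgeColoredGraph V d) (S : Set (Fin d)) :
    Equivalence (G.ReachIn S) := by
  have : Std.Symm fun a b => ∃ i ∈ S, G.m i a = b :=
    ⟨fun a _ ⟨i, hi, h⟩ => ⟨i, hi, h ▸ G.invol i a⟩⟩
  exact ⟨fun _ => .refl, fun h => Relation.ReflTransGen.stdSymm.symm _ _ h, .trans⟩

abbrev SameComp (G : EdgeColoredGraph V (d + 1)) : V → V → Prop :=
  G.ReachIn {i | i ≠ Fin.last d}

instance [DecidableEq V] (G : EdgeColoredGraph V (d + 1)) (v : V) : DecidableEq (G.comp v) :=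
  inferInstanceAs (DecidableEq {u // G.SameComp v u})

noncomputable instance [Fintype V] (G : EdgeColoredGraph V (d + 1)) (v : V) :
    Fintype (G.comp v) := by
  classical exact inferInstanceAs (Fintype {u // G.SameComp v u})

variable [DecidableEq V]

def HasLogIsoperimetry [Fintype V] (G : EdgeColoredGraph V d) : Prop :=
  ∀ U : Finset V, U.Nonempty → (#U : ℝ) * (d - logb 2 #U) ≤ G.boundary U

theorem sum_card_colors_exiting (G : EdgeColoredGraph V d) (K U : Finset V) :
    ∑ u ∈ K, #{i | G.m i u ∉ U} = ∑ i, #{u ∈ K | G.m i u ∉ U} :=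
  sum_card_bipartiteAbove_eq_sum_card_bipartiteBelow _

theorem boundary_restrict [Fintype V] (G : EdgeColoredGraph V (d + 1)) (v : V)
    [DecidablePred (G.SameComp v)] (U : Finset V) :
    (G.restrict v).boundary (U.subtype (G.SameComp v)) =
      ∑ i : Fin d, #{u ∈ U | G.SameComp v u ∧ G.m i.castSucc u ∉ U} := by
  refine sum_congr rfl fun i _ => ?_
  rw [← card_filter_subtype (G.SameComp v) (fun u => G.m i.castSucc u ∉ U) U]
  -- `G.comp v` agrees with `{u // G.SameComp v u}` only after unfolding, which `congr` needs
  unfold comp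
  congr 1
  exact filter_congr fun u _ => not_congr mem_subtype

theorem card_top_inside_le_card_outside_comp (G : EdgeColoredGraph V (d + 1))
    (hTop : ∀ v, ¬ G.SameComp v (G.m (Fin.last d) v)) (U : Finset V) (v : V)
    [DecidablePred (G.SameComp v)] :
    #{u ∈ U | G.SameComp v u ∧ G.m (Fin.last d) u ∈ U} ≤ #{u ∈ U | ¬ G.SameComp v u} := by
  refine card_le_card_of_injOn (G.m (Fin.last d)) (fun u hu => ?_) fun a _ b _ h => ?_
  · simp only [coe_filter, Set.mem_ofPred] at hu ⊢
    exact ⟨hu.2.2, fun h => hTop u (((G.reachIn_equivalence _).symm hu.2.1).trans h)⟩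
  · simpa only [G.invol] using congrArg (G.m (Fin.last d)) h

theorem card_comp_mul_le_sum_card_exiting [Fintype V] (G : EdgeColoredGraph V (d + 1))
    (hTop : ∀ v, ¬ G.SameComp v (G.m (Fin.last d) v)) (v : V) [DecidablePred (G.SameComp v)]
    (hRest : (G.restrict v).HasLogIsoperimetry) {U : Finset V} (hv : v ∈ U) :
    (#{u ∈ U | G.SameComp v u} : ℝ) * (d + 1 - logb 2 #U) ≤
      ∑ i, #{u ∈ U | G.SameComp v u ∧ G.m i u ∉ U} := by
  set x := #{u ∈ U | G.SameComp v u}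
  set E := #{u ∈ U | G.SameComp v u ∧ G.m (Fin.last d) u ∈ U}
  have hx : 0 < x := card_pos.2 ⟨v, mem_filter.2 ⟨hv, .refl⟩⟩
  have hxU : x ≤ #U := card_filter_le _ _
  have hlow : (x : ℝ) * (d - logb 2 x) ≤
      ∑ i : Fin d, #{u ∈ U | G.SameComp v u ∧ G.m i.castSucc u ∉ U} := by
    have hcard : x = #(U.subtype (G.SameComp v) : Finset (G.comp v)) := (card_subtype _ _).symm
    rw [hcard, ← boundary_restrict]
    exact hRest _ ⟨⟨v, .refl⟩, mem_subtype.2 hv⟩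
  have htop : (#{u ∈ U | G.SameComp v u ∧ G.m (Fin.last d) u ∉ U} : ℝ) = x - E := by
    have := card_filter_add_card_filter_not (s := {u ∈ U | G.SameComp v u})
      (fun u => G.m (Fin.last d) u ∈ U)
    rw [filter_filter, filter_filter] at this
    rw [eq_sub_iff_add_eq]
    exact_mod_cast (by omega : _ + E = x)
  have hE : (E : ℝ) ≤ min (x : ℝ) (#U - x) := by
    refine le_min (mod_cast card_le_card (monotone_filter_right _ fun _ _ h => h.1)) ?_
    have hsplit : x + #{u ∈ U | ¬ G.SameComp v u} = #U := card_filter_add_card_filter_not _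
    have hinside := G.card_top_inside_le_card_outside_comp hTop U v
    rw [le_sub_iff_add_le]
    exact_mod_cast (by omega : E + x ≤ #U)
  have hcost := min_le_mul_logb_two_sub (x := x) (s := #U) (mod_cast hx) (mod_cast hxU)
  rw [Fin.sum_univ_castSucc, Nat.cast_add, htop]
  linarith [hE.trans hcost]

theorem hasLogIsoperimetry_succ [Fintype V] (G : EdgeColoredGraph V (d + 1))
    (hTop : ∀ v, ¬ G.SameComp v (G.m (Fin.last d) v))
    (hRest : ∀ v, (G.restrict v).HasLogIsoperimetry) :
    G.HasLogIsoperimetry := by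
  classical
  intro U _
  rw [boundary, ← sum_card_colors_exiting, Nat.cast_sum, Nat.cast_succ]
  refine card_mul_le_sum_of_forall_class (G.reachIn_equivalence {i | i ≠ Fin.last d}) U _ _
    fun v hv => ?_
  rw [← Nat.cast_sum, sum_card_colors_exiting]
  simp only [filter_filter]
  exact G.card_comp_mul_le_sum_card_exiting hTop v (hRest v) hv

theorem IsWeakPseudoCube.hasLogIsoperimetry :
    ∀ {d : ℕ} {V : Type} [Fintype V] [DecidableEq V] {G : EdgeColoredGraph V d},
      G.IsWeakPseudoCube → G.HasLogIsoperimetry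
  | 0, _, _, _, G, _ => fun U hU => by
    have hlog : 0 ≤ logb 2 (#U : ℝ) := logb_nonneg one_lt_two (mod_cast hU.card_pos)
    simp only [boundary, univ_eq_empty, sum_empty, CharP.cast_eq_zero, zero_sub]
    exact mul_nonpos_of_nonneg_of_nonpos (Nat.cast_nonneg _) (neg_nonpos.2 hlog)
  | d + 1, _, _, _, G, ⟨hTop, hRest⟩ => by
    classical
    exact G.hasLogIsoperimetry_succ hTop fun v => (hRest v).hasLogIsoperimetry

end EdgeColoredGraph

/-- For every `d`-dimensional weak pseudo-cube `G` and every nonempty vertex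
set `U` of size `s`, the edge expansion satisfies `∂(U)/|U| ≥ d - log₂ s`. -/
theorem weakPseudoCube_isoperimetry {V : Type} [Fintype V] [DecidableEq V] {d : ℕ}
    (G : EdgeColoredGraph V d) (hG : G.IsWeakPseudoCube) (U : Finset V) (hU : U.Nonempty) :
    (G.boundary U : ℝ) / U.card ≥ d - Real.logb 2 U.card := by
  rw [ge_iff_le, le_div_iff₀ (mod_cast hU.card_pos), mul_comm]
  exact hG.hasLogIsoperimetry U hU
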